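/- Fix κ = 0 and any α ∈ (α_lb, α_ub), and let q = q_⋆(α), ψ = ψ_⋆(α). Parametrizing λ = 1 − ι, it holds for all 0 < ι ≤ 0.025 that 𝓗(λ) − 𝓗(1) ≤ 0.81·ι + (ι/2)·log(1/ι). -/

import Mathlib

open MeasureTheory Real Set Filter

noncomputable section

/-- The standard gaussian density `φ(x) = exp(-x²/2)/√(2π)`. -/
def gphi (x : ℝ) : ℝ := Real.exp (-x ^ 2 / 2) / Real.sqrt (2 * Real.pi)

/-- The complementary gaussian distribution function `Φ̄(x) = ∫_x^∞ φ(u) du`. -/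
def Phibar (x : ℝ) : ℝ := ∫ u in Set.Ioi x, gphi u

/-- `𝓔(x) = φ(x) / Φ̄(x)`. -/
def gaussE (x : ℝ) : ℝ := gphi x / Phibar x

/-- `F_q(x) = 𝓔((κ - x)/√(1-q)) / √(1-q)` (with threshold `κ`). -/
def Fq (κ q x : ℝ) : ℝ := gaussE ((κ - x) / Real.sqrt (1 - q)) / Real.sqrt (1 - q)

/-- `P(ψ) = ∫ tanh(√ψ z)² φ(z) dz`. -/
def Pfun (ψ : ℝ) : ℝ := ∫ z : ℝ, Real.tanh (Real.sqrt ψ * z) ^ 2 * gphi z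

/-- `R_κ(q, α) = α ∫ F_q(√q z)² φ(z) dz`. -/
def Rfun (κ q α : ℝ) : ℝ := α * ∫ z : ℝ, Fq κ q (Real.sqrt q * z) ^ 2 * gphi z

/-- `𝒢_κ(α, q, ψ)`. -/
def Gfun (κ α q ψ : ℝ) : ℝ :=
  -(ψ * (1 - q)) / 2 + (∫ z : ℝ, Real.log (2 * Real.cosh (Real.sqrt ψ * z)) * gphi z)
    + α * ∫ z : ℝ, Real.log (Phibar ((κ - Real.sqrt q * z) / Real.sqrt (1 - q))) * gphi z

def alphaLB : ℝ := 0.833078599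
def alphaUB : ℝ := 0.833078600
def qLB : ℝ := 0.56394907949
def qLU : ℝ := 0.56394907950
def qUL : ℝ := 0.56394908029
def qUB : ℝ := 0.56394908030
def psiLB : ℝ := 2.5763513100
def psiLU : ℝ := 2.5763513103
def psiUL : ℝ := 2.5763513221
def psiUB : ℝ := 2.5763513224

/-- `Δ_H(A) = √(A² + m² - (Am)²)` where `m = tanh H`. -/
def DeltaH (H A : ℝ) : ℝ := Real.sqrt (A ^ 2 + Real.tanh H ^ 2 - (A * Real.tanh H) ^ 2)

/-- `B_H(A) = A(1+m)/(Δ_H(A) - m)` where `m = tanh H`. -/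
def BH (H A : ℝ) : ℝ := A * (1 + Real.tanh H) / (DeltaH H A - Real.tanh H)

/-- `S_H(A) = B_H(A)^{-sgn H}`. -/
def SH (H A : ℝ) : ℝ := BH H A ^ (-Real.sign H)

/-- `D_H(A) = (A² - 1)(1 - m²)²/(Δ_H(A) + 1)²` where `m = tanh H`. -/
def DH (H A : ℝ) : ℝ := (A ^ 2 - 1) * (1 - Real.tanh H ^ 2) ^ 2 / (DeltaH H A + 1) ^ 2

/-- The mass function of the measure `P_{H,D}` on `{-1,+1}²` (encoded by `Bool × Bool`,
with `true` for `+1`). -/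
def PHD (H D : ℝ) : Bool × Bool → ℝ := fun p =>
  match p with
  | (true, true) => ((1 + Real.tanh H) ^ 2 + D) / 4
  | (true, false) => (1 - Real.tanh H ^ 2 - D) / 4
  | (false, true) => (1 - Real.tanh H ^ 2 - D) / 4
  | (false, false) => ((1 - Real.tanh H) ^ 2 + D) / 4

/-- `Γ(H, D)`, the Shannon entropy of `P_{H,D}`. -/
def GammaHD (H D : ℝ) : ℝ := ∑ p : Bool × Bool, Real.negMulLog (PHD H D p)

/-- The spin value of a Boolean: `+1` or `-1`. -/
def spin (b : Bool) : ℝ := if b then 1 else -1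

/-- The mass function of the probability measure `Q_{A,B}` on `{-1,+1}²`, with
`a = (log A)/2`, `b = (log B)/2`. -/
def QAB (A B : ℝ) : Bool × Bool → ℝ := fun p =>
  4 * Real.exp (Real.log A / 2 * (spin p.1 * spin p.2 - 1)
      + Real.log B / 2 * (spin p.1 + spin p.2)) / (B + 1 / B + 2 / A)

/-- `ℓ(A) = ∫ (D_{√ψ z}(A)/(1-q)) φ(z) dz`. -/
def ellfun (q ψ A : ℝ) : ℝ := ∫ z : ℝ, DH (Real.sqrt ψ * z) A / (1 - q) * gphi z

/-- `λ_min = -∫ ((1 - |tanh(√ψ z)|)²/(1-q)) φ(z) dz`. -/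
def lamMin (q ψ : ℝ) : ℝ :=
  -∫ z : ℝ, (1 - |Real.tanh (Real.sqrt ψ * z)|) ^ 2 / (1 - q) * gphi z

/-- `A(λ) = ℓ⁻¹(λ)`, the inverse of the bijection `ℓ : (0,∞) → (λ_min, 1)`. -/
def Ainv (q ψ lam : ℝ) : ℝ := Function.invFunOn (ellfun q ψ) (Set.Ioi 0) lam

/-- `𝓗_⋆ = -ψ(1-q) + ∫ log(2 cosh(√ψ z)) φ(z) dz`. -/
def Hstar (q ψ : ℝ) : ℝ :=
  -(ψ * (1 - q)) + ∫ z : ℝ, Real.log (2 * Real.cosh (Real.sqrt ψ * z)) * gphi z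

/-- `𝓗(λ) = -2𝓗_⋆ + ∫ Γ(√ψ z, D_{√ψ z}(A(λ))) φ(z) dz`. -/
def HHfun (q ψ lam : ℝ) : ℝ :=
  -(2 * Hstar q ψ)
    + ∫ z : ℝ, GammaHD (Real.sqrt ψ * z) (DH (Real.sqrt ψ * z) (Ainv q ψ lam)) * gphi z

/-- `ξ_{q,z} = -√q z/√(1-q)` (the threshold `κ = 0` case). -/
def xiqz (q z : ℝ) : ℝ := -(Real.sqrt q * z) / Real.sqrt (1 - q)

/-- `𝓟_⋆ = ψ(1-q)/2 + α ∫ log Φ̄(ξ_{q,z}) φ(z) dz`. -/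
def Pstar (α q ψ : ℝ) : ℝ :=
  ψ * (1 - q) / 2 + α * ∫ z : ℝ, Real.log (Phibar (xiqz q z)) * gphi z

/-- `ℐ_s(λ)`: the double integral
`α ∫∫ log Φ̄((ξ_{q,z} - λν)/√(1-λ²) - 𝓔(ξ_{q,z}) s/(√ψ √(1-q))) φ_{ξ_{q,z}}(ν) dν φ(z) dz`. -/
def Iint (α q ψ lam s : ℝ) : ℝ :=
  α * ∫ z : ℝ,
      (∫ ν in Set.Ici (xiqz q z),
          Real.log (Phibar ((xiqz q z - lam * ν) / Real.sqrt (1 - lam ^ 2)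
            - gaussE (xiqz q z) * s / (Real.sqrt ψ * Real.sqrt (1 - q)))) * gphi ν)
        / Phibar (xiqz q z) * gphi z

/-- `𝓟(λ) = -𝓟_⋆ + ψ(1-q)(1-λ)/(2(1+λ)) + ℐ(λ)` where `ℐ(λ) = ℐ_0(λ)`. -/
def PPfun (α q ψ lam : ℝ) : ℝ :=
  -(Pstar α q ψ) + ψ * (1 - q) * (1 - lam) / (2 * (1 + lam)) + Iint α q ψ lam 0

/-- `𝒮_⋆(λ) = 𝓗(λ) + 𝓟(λ) + inf_s { s²/2 - √ψ √(1-q) s √((1-λ)/(1+λ)) + ℐ_s(λ) - ℐ(λ) }`. -/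
def Sstar (α q ψ lam : ℝ) : ℝ :=
  HHfun q ψ lam + PPfun α q ψ lam +
    ⨅ s : ℝ, (s ^ 2 / 2
      - Real.sqrt ψ * Real.sqrt (1 - q) * s * Real.sqrt ((1 - lam) / (1 + lam))
      + Iint α q ψ lam s - Iint α q ψ lam 0)

/-!
Write `m = tanh H` with `H = √ψ z`, and `D = D_H(A(λ))`. The law `P_{H,D}` has marginals
`((1 + m)/2, (1 - m)/2)` and off-diagonal masses `(1 - m² - D)/4`, so Gibbs' inequality against
the weights `((1 + m)/2, c, c, (1 - m)/2)` bounds `Γ(H, D)` by the two-point entropy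
`log (2 cosh H) - H tanh H` plus `(1 - m² - D)/4 · (-2 log 2 - 2 log c) + 2c`, for any `c > 0`.
Under the gaussian measure the two-point entropy integrates to `𝓗_⋆`, because Stein's identity
and the fixed-point equation `q = P(ψ)` give `∫ H tanh H = ψ(1 - q)`; the off-diagonal mass
integrates to `(1 - q)(1 - λ)/4` since `ℓ(A(λ)) = λ`. The inverse `A(λ)` exists for `0 ≤ λ < 1`
by the intermediate value theorem, as `ℓ(1) = 0` and `ℓ(A) ≥ 1 - 2/((1 - q)A)`. With
`λ = 1 - ι`, `c = ι/8` and `1 - q ≤ 1/2` the bound is at most `0.6 ι + (ι/4) log(1/ι)`.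
-/

open ProbabilityTheory

lemma gphi_eq_gaussianPDFReal : gphi = gaussianPDFReal 0 1 := by
  ext x
  simp [gphi, gaussianPDFReal, div_eq_inv_mul]

lemma integral_mul_gphi_eq_integral_gaussianReal (f : ℝ → ℝ) :
    ∫ x, f x * gphi x = ∫ x, f x ∂gaussianReal 0 1 := by
  simp [integral_gaussianReal_eq_integral_smul, gphi_eq_gaussianPDFReal, mul_comm]

lemma integrable_gaussianReal_iff_integrable_mul_gphi {f : ℝ → ℝ} :
    Integrable f (gaussianReal 0 1) ↔ Integrable (fun x => f x * gphi x) := by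
  rw [gaussianReal_of_var_ne_zero 0 one_ne_zero,
    integrable_withDensity_iff_integrable_smul' (measurable_gaussianPDF 0 1)
      (ae_of_all _ fun _ => gaussianPDF_lt_top)]
  simp only [toReal_gaussianPDF, smul_eq_mul, gphi_eq_gaussianPDFReal, mul_comm]

lemma integrable_id_gaussianReal : Integrable id (gaussianReal 0 1) :=
  memLp_one_iff_integrable.mp (memLp_id_gaussianReal 1)

lemma hasDerivAt_gphi (x : ℝ) : HasDerivAt gphi (-(x * gphi x)) x := by
  have h : HasDerivAt (fun y : ℝ => -y ^ 2 / 2) (-x) x :=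
    ((hasDerivAt_pow 2 x).fun_neg.div_const 2).congr_deriv (by ring)
  exact (h.exp.div_const (Real.sqrt (2 * Real.pi))).congr_deriv (by unfold gphi; ring)

theorem integral_mul_eq_integral_deriv_gaussianReal {g g' : ℝ → ℝ} {C : ℝ}
    (hg : ∀ x, HasDerivAt g (g' x) x) (hC : ∀ x, |g x| ≤ C)
    (hg' : Integrable g' (gaussianReal 0 1)) :
    ∫ x, x * g x ∂gaussianReal 0 1 = ∫ x, g' x ∂gaussianReal 0 1 := by
  have hmeas : AEStronglyMeasurable g volume :=
    (continuous_iff_continuousAt.mpr fun x => (hg x).continuousAt).aestronglyMeasurable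
  have hbdd : ∀ᵐ x ∂volume, ‖g x‖ ≤ C := ae_of_all _ hC
  have hgphi : Integrable gphi := by
    simpa using integrable_gaussianReal_iff_integrable_mul_gphi.mp (integrable_const (1 : ℝ))
  have hid : Integrable fun x => x * gphi x :=
    integrable_gaussianReal_iff_integrable_mul_gphi.mp integrable_id_gaussianReal
  have key := integral_mul_deriv_eq_deriv_mul_of_integrable (fun x _ => hg x)
    (fun x _ => hasDerivAt_gphi x) (hid.neg.bdd_mul hmeas hbdd)
    (integrable_gaussianReal_iff_integrable_mul_gphi.mp hg') (hgphi.bdd_mul hmeas hbdd)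
  simp only [← integral_mul_gphi_eq_integral_gaussianReal]
  simp only [mul_neg, integral_neg, neg_inj] at key
  simpa [mul_comm, mul_left_comm] using key

lemma Real.hasDerivAt_tanh (x : ℝ) : HasDerivAt Real.tanh (1 - Real.tanh x ^ 2) x := by
  have h := (Real.hasDerivAt_sinh x).div (Real.hasDerivAt_cosh x) (Real.cosh_pos x).ne'
  rw [show Real.sinh / Real.cosh = Real.tanh from
    funext fun y => (Real.tanh_eq_sinh_div_cosh y).symm] at h
  refine h.congr_deriv ?_
  rw [Real.tanh_eq_sinh_div_cosh]
  field_simp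

@[fun_prop]
lemma Real.continuous_tanh : Continuous Real.tanh :=
  continuous_iff_continuousAt.mpr fun x => (Real.hasDerivAt_tanh x).continuousAt

lemma hasDerivAt_tanh_const_mul (a x : ℝ) :
    HasDerivAt (fun z => Real.tanh (a * z)) (a * (1 - Real.tanh (a * x) ^ 2)) x := by
  have h := (Real.hasDerivAt_tanh (a * x)).comp x ((hasDerivAt_id x).const_mul a)
  rwa [mul_one, mul_comm] at h

section DH

variable (H A : ℝ)

lemma DeltaH_nonneg : 0 ≤ DeltaH H A := Real.sqrt_nonneg _

lemma DeltaH_sq : DeltaH H A ^ 2 = A ^ 2 * (1 - Real.tanh H ^ 2) + Real.tanh H ^ 2 := by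
  rw [DeltaH, Real.sq_sqrt (by nlinarith [Real.tanh_sq_lt_one H, sq_nonneg A])]
  ring

lemma abs_tanh_le_DeltaH : |Real.tanh H| ≤ DeltaH H A :=
  Real.abs_le_sqrt (by nlinarith [Real.tanh_sq_lt_one H, sq_nonneg A])

lemma DH_eq : DH H A = (1 - Real.tanh H ^ 2) * (DeltaH H A - 1) / (DeltaH H A + 1) := by
  have h : DeltaH H A + 1 ≠ 0 := by linarith [DeltaH_nonneg H A]
  rw [DH]
  field_simp
  linear_combination (-(1 - Real.tanh H ^ 2)) * DeltaH_sq H A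

lemma DH_one : DH H 1 = 0 := by simp [DH]

lemma DH_le : DH H A ≤ 1 - Real.tanh H ^ 2 := by
  have := Real.tanh_sq_lt_one H
  rw [DH_eq, div_le_iff₀ (by linarith [DeltaH_nonneg H A])]
  nlinarith

lemma neg_sq_le_DH : -(1 - |Real.tanh H|) ^ 2 ≤ DH H A := by
  have := abs_tanh_le_DeltaH H A
  have := Real.abs_tanh_lt_one H
  rw [DH_eq, le_div_iff₀ (by linarith [DeltaH_nonneg H A])]
  nlinarith [sq_abs (Real.tanh H), abs_nonneg (Real.tanh H)]

lemma abs_DH_le_one : |DH H A| ≤ 1 := by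
  have := neg_sq_le_DH H A
  have := Real.abs_tanh_lt_one H
  rw [abs_le]
  constructor <;> nlinarith [DH_le H A, sq_abs (Real.tanh H), abs_nonneg (Real.tanh H)]

lemma one_sub_tanh_sq_sub_le_DH {A : ℝ} (hA : 0 < A) :
    1 - Real.tanh H ^ 2 - 2 / A ≤ DH H A := by
  have hm := Real.tanh_sq_lt_one H
  have hΔ : A * (1 - Real.tanh H ^ 2) ≤ DeltaH H A := by
    refine le_of_pow_le_pow_left₀ two_ne_zero (DeltaH_nonneg H A) ?_
    nlinarith [DeltaH_sq H A, sq_nonneg (Real.tanh H)]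
  have h2 : 2 * (1 - Real.tanh H ^ 2) ≤ 2 / A * (DeltaH H A + 1) := by
    rw [div_mul_eq_mul_div, le_div_iff₀ hA]
    nlinarith
  rw [DH_eq, le_div_iff₀ (by linarith [DeltaH_nonneg H A])]
  nlinarith

lemma Continuous.DH {X : Type*} [TopologicalSpace X] {f g : X → ℝ} (hf : Continuous f)
    (hg : Continuous g) : Continuous fun x => DH (f x) (g x) := by
  have hΔ : Continuous fun x => DeltaH (f x) (g x) := by
    unfold DeltaH
    fun_prop
  unfold _root_.DH
  exact Continuous.div (by fun_prop) ((hΔ.add continuous_const).pow 2)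
    fun x => by have := DeltaH_nonneg (f x) (g x); positivity

end DH

lemma GammaHD_eq (H D : ℝ) : GammaHD H D =
    Real.negMulLog (((1 + Real.tanh H) ^ 2 + D) / 4)
      + 2 * Real.negMulLog ((1 - Real.tanh H ^ 2 - D) / 4)
      + Real.negMulLog (((1 - Real.tanh H) ^ 2 + D) / 4) := by
  simp only [GammaHD, Fintype.sum_prod_type, Fintype.univ_bool, Finset.sum_insert,
    Finset.mem_singleton, Bool.true_eq_false, not_false_eq_true, Finset.sum_singleton, PHD]
  ring

lemma Continuous.GammaHD {X : Type*} [TopologicalSpace X] {f g : X → ℝ} (hf : Continuous f)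
    (hg : Continuous g) : Continuous fun x => GammaHD (f x) (g x) := by
  simp only [GammaHD_eq]
  fun_prop

lemma sum_PHD (H D : ℝ) : ∑ p, PHD H D p = 1 := by
  simp only [Fintype.sum_prod_type, Fintype.univ_bool, Finset.sum_insert,
    Finset.mem_singleton, Bool.true_eq_false, not_false_eq_true, Finset.sum_singleton, PHD]
  ring

lemma PHD_nonneg {H D : ℝ} (hD₁ : -(1 - |Real.tanh H|) ^ 2 ≤ D)
    (hD₂ : D ≤ 1 - Real.tanh H ^ 2) (p : Bool × Bool) : 0 ≤ PHD H D p := by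
  have := le_abs_self (Real.tanh H)
  have := neg_abs_le (Real.tanh H)
  have := Real.abs_tanh_lt_one H
  rcases p with ⟨_ | _, _ | _⟩ <;> simp only [PHD] <;> nlinarith [sq_abs (Real.tanh H)]

lemma abs_GammaHD_le {H D : ℝ} (hD₁ : -(1 - |Real.tanh H|) ^ 2 ≤ D)
    (hD₂ : D ≤ 1 - Real.tanh H ^ 2) : |GammaHD H D| ≤ 3 := by
  have hp := PHD_nonneg hD₁ hD₂
  have hp1 (p) : PHD H D p ≤ 1 :=
    sum_PHD H D ▸ Finset.single_le_sum (fun p _ => hp p) (Finset.mem_univ p)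
  have hΓ : 0 ≤ GammaHD H D := Finset.sum_nonneg fun p _ => Real.negMulLog_nonneg (hp p) (hp1 p)
  rw [abs_of_nonneg hΓ]
  calc GammaHD H D ≤ ∑ p, (1 - PHD H D p) :=
        Finset.sum_le_sum fun p _ => Real.negMulLog_le_one_sub_self (hp p)
    _ = 3 := by simp [Finset.sum_sub_distrib, sum_PHD]; norm_num

/-- The tangent line of the concave function `negMulLog` at `c`. -/
lemma Real.negMulLog_le_of_pos {x c : ℝ} (hx : 0 ≤ x) (hc : 0 < c) :
    Real.negMulLog x ≤ -x * Real.log c - x + c := by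
  rcases hx.eq_or_lt with rfl | hx
  · simpa using hc.le
  · have h := mul_le_mul_of_nonneg_left (Real.log_le_sub_one_of_pos (div_pos hc hx)) hx.le
    rw [Real.log_div hc.ne' hx.ne', mul_sub, mul_sub_one, mul_div_cancel₀ _ hx.ne'] at h
    rw [Real.negMulLog]
    linarith

lemma negMulLog_add_negMulLog_tanh (H : ℝ) :
    Real.negMulLog ((1 + Real.tanh H) / 2) + Real.negMulLog ((1 - Real.tanh H) / 2)
      = Real.log (2 * Real.cosh H) - H * Real.tanh H := by
  have hc := Real.cosh_pos H
  have h_add : (1 + Real.tanh H) / 2 = Real.exp H / (2 * Real.cosh H) := by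
    rw [Real.tanh_eq_sinh_div_cosh, ← Real.cosh_add_sinh]
    field_simp
  have h_sub : (1 - Real.tanh H) / 2 = Real.exp (-H) / (2 * Real.cosh H) := by
    rw [Real.tanh_eq_sinh_div_cosh, ← Real.cosh_sub_sinh]
    field_simp
  rw [h_add, h_sub]
  simp only [Real.negMulLog, Real.log_exp,
    Real.log_div (Real.exp_pos _).ne' (by positivity : 2 * Real.cosh H ≠ 0)]
  rw [Real.tanh_eq_sinh_div_cosh, Real.sinh_eq]
  field_simp
  rw [Real.cosh_eq]
  ring

/-- Gibbs' inequality against the weights `((1 + m)/2, c, c, (1 - m)/2)`, `m = tanh H`. -/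
lemma GammaHD_le {H D c : ℝ} (hD₁ : -(1 - |Real.tanh H|) ^ 2 ≤ D)
    (hD₂ : D ≤ 1 - Real.tanh H ^ 2) (hc : 0 < c) :
    GammaHD H D ≤ Real.log (2 * Real.cosh H) - H * Real.tanh H
      + (-(2 * Real.log 2) - 2 * Real.log c) / 4 * (1 - Real.tanh H ^ 2 - D) + 2 * c := by
  have hp := PHD_nonneg hD₁ hD₂
  rw [← negMulLog_add_negMulLog_tanh, GammaHD_eq]
  obtain ⟨hm₁, hm₂⟩ := abs_lt.mp (Real.abs_tanh_lt_one H)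
  have h₁ := Real.negMulLog_le_of_pos (hp (true, true))
    (by linarith : 0 < (1 + Real.tanh H) / 2)
  have h₂ := Real.negMulLog_le_of_pos (hp (true, false)) hc
  have h₄ := Real.negMulLog_le_of_pos (hp (false, false))
    (by linarith : 0 < (1 - Real.tanh H) / 2)
  have hlog : Real.log ((1 + Real.tanh H) / 2) + Real.log ((1 - Real.tanh H) / 2)
      ≤ -(2 * Real.log 2) := by
    rw [← Real.log_mul (by linarith) (by linarith), ← Real.log_rpow two_pos, ← Real.log_inv]
    refine Real.log_le_log (by nlinarith) ?_
    norm_num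
    nlinarith
  have hkey := mul_le_mul_of_nonneg_left hlog (hp (true, false))
  simp only [PHD] at h₁ h₂ h₄ hkey
  simp only [Real.negMulLog] at h₁ h₂ h₄ ⊢
  linarith

lemma integrable_gaussianReal_of_abs_le {f : ℝ → ℝ} (hf : Continuous f) {C : ℝ}
    (hC : ∀ x, |f x| ≤ C) : Integrable f (gaussianReal 0 1) :=
  Integrable.of_bound hf.aestronglyMeasurable C (ae_of_all _ hC)

lemma integrable_sq_gaussianReal : Integrable (fun x : ℝ => x ^ 2) (gaussianReal 0 1) :=
  (memLp_id_gaussianReal 2).integrable_sq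

lemma integrable_log_two_mul_cosh (a : ℝ) :
    Integrable (fun z => Real.log (2 * Real.cosh (a * z))) (gaussianReal 0 1) := by
  refine Integrable.mono' ((integrable_const (Real.log 2)).add
    (integrable_sq_gaussianReal.const_mul (a ^ 2 / 2)))
    (Measurable.aestronglyMeasurable (by fun_prop)) (ae_of_all _ fun z => ?_)
  have hcosh := Real.one_le_cosh (a * z)
  rw [Real.norm_of_nonneg (Real.log_nonneg (by linarith))]
  calc Real.log (2 * Real.cosh (a * z)) ≤ Real.log (2 * Real.exp ((a * z) ^ 2 / 2)) :=
        Real.log_le_log (by positivity) (by linarith [Real.cosh_le_exp_half_sq (a * z)])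
    _ = Real.log 2 + a ^ 2 / 2 * z ^ 2 := by
        rw [Real.log_mul two_ne_zero (Real.exp_pos _).ne', Real.log_exp]
        ring

lemma integrable_tanh_sq (a : ℝ) :
    Integrable (fun z => Real.tanh (a * z) ^ 2) (gaussianReal 0 1) :=
  integrable_gaussianReal_of_abs_le (by fun_prop) fun z => by
    rw [abs_of_nonneg (sq_nonneg _)]
    exact (Real.tanh_sq_lt_one _).le

lemma integrable_one_sub_tanh_sq (a : ℝ) :
    Integrable (fun z => 1 - Real.tanh (a * z) ^ 2) (gaussianReal 0 1) :=
  (integrable_const 1).sub (integrable_tanh_sq a)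

lemma integrable_mul_tanh (a : ℝ) :
    Integrable (fun z => a * z * Real.tanh (a * z)) (gaussianReal 0 1) :=
  (integrable_id_gaussianReal.const_mul a).mul_bdd (c := 1) (by fun_prop)
    (ae_of_all _ fun z => (Real.abs_tanh_lt_one _).le)

lemma integral_one_sub_tanh_sq {q ψ : ℝ} (hq : q = Pfun ψ) :
    ∫ z, (1 - Real.tanh (Real.sqrt ψ * z) ^ 2) ∂gaussianReal 0 1 = 1 - q := by
  rw [integral_sub (integrable_const 1) (integrable_tanh_sq _), hq, Pfun,
    integral_mul_gphi_eq_integral_gaussianReal]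
  simp

lemma integral_mul_tanh {q ψ : ℝ} (hψ : 0 ≤ ψ) (hq : q = Pfun ψ) :
    ∫ z, Real.sqrt ψ * z * Real.tanh (Real.sqrt ψ * z) ∂gaussianReal 0 1 = ψ * (1 - q) := by
  have hstein := integral_mul_eq_integral_deriv_gaussianReal (C := 1)
    (fun z => hasDerivAt_tanh_const_mul (Real.sqrt ψ) z)
    (fun z => (Real.abs_tanh_lt_one _).le)
    ((integrable_one_sub_tanh_sq _).const_mul _)
  rw [integral_const_mul, integral_one_sub_tanh_sq hq] at hstein
  simp_rw [mul_assoc]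
  rw [integral_const_mul, hstein, ← mul_assoc, Real.mul_self_sqrt hψ]

lemma integral_log_two_mul_cosh_sub_mul_tanh {q ψ : ℝ} (hψ : 0 ≤ ψ) (hq : q = Pfun ψ) :
    ∫ z, (Real.log (2 * Real.cosh (Real.sqrt ψ * z))
      - Real.sqrt ψ * z * Real.tanh (Real.sqrt ψ * z)) ∂gaussianReal 0 1 = Hstar q ψ := by
  rw [integral_sub (integrable_log_two_mul_cosh _) (integrable_mul_tanh _),
    integral_mul_tanh hψ hq, Hstar, integral_mul_gphi_eq_integral_gaussianReal]
  ring

lemma Pfun_nonneg (ψ : ℝ) : 0 ≤ Pfun ψ :=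
  integral_nonneg fun z => mul_nonneg (sq_nonneg _) (by rw [gphi]; positivity)

lemma Rfun_nonneg (κ q : ℝ) {α : ℝ} (hα : 0 ≤ α) : 0 ≤ Rfun κ q α :=
  mul_nonneg hα (integral_nonneg fun z => mul_nonneg (sq_nonneg _) (by rw [gphi]; positivity))

section EllFun

variable {q ψ : ℝ}

lemma ellfun_eq_integral (A : ℝ) :
    ellfun q ψ A = (∫ z, DH (Real.sqrt ψ * z) A ∂gaussianReal 0 1) / (1 - q) := by
  rw [ellfun, ← integral_div, ← integral_mul_gphi_eq_integral_gaussianReal]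

lemma integrable_DH (a A : ℝ) : Integrable (fun z => DH (a * z) A) (gaussianReal 0 1) :=
  integrable_gaussianReal_of_abs_le ((continuous_const_mul a).DH continuous_const)
    fun _ => abs_DH_le_one _ _

lemma continuous_ellfun : Continuous (ellfun q ψ) := by
  rw [funext ellfun_eq_integral]
  refine Continuous.div_const (continuous_of_dominated
    (fun A => ((continuous_const_mul _).DH continuous_const).aestronglyMeasurable)
    (fun A => ae_of_all _ fun _ => abs_DH_le_one _ A) (integrable_const 1)
    (ae_of_all _ fun _ => continuous_const.DH continuous_id)) _

lemma ellfun_one : ellfun q ψ 1 = 0 := by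
  simp [ellfun, DH_one]

lemma integral_one_sub_tanh_sq_sub_DH (hq : q = Pfun ψ) (hq₁ : q < 1) (A : ℝ) :
    ∫ z, (1 - Real.tanh (Real.sqrt ψ * z) ^ 2 - DH (Real.sqrt ψ * z) A) ∂gaussianReal 0 1
      = (1 - q) * (1 - ellfun q ψ A) := by
  rw [integral_sub (integrable_one_sub_tanh_sq _) (integrable_DH _ A),
    integral_one_sub_tanh_sq hq, ellfun_eq_integral]
  field_simp [(sub_pos.mpr hq₁).ne']

lemma one_sub_div_le_ellfun (hq : q = Pfun ψ) (hq₁ : q < 1) {A : ℝ} (hA : 0 < A) :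
    1 - 2 / ((1 - q) * A) ≤ ellfun q ψ A := by
  have h : ∫ z, (1 - Real.tanh (Real.sqrt ψ * z) ^ 2 - 2 / A) ∂gaussianReal 0 1
      ≤ ∫ z, DH (Real.sqrt ψ * z) A ∂gaussianReal 0 1 :=
    integral_mono ((integrable_one_sub_tanh_sq _).sub (integrable_const _)) (integrable_DH _ A)
      fun z => one_sub_tanh_sq_sub_le_DH (Real.sqrt ψ * z) hA
  rw [integral_sub (integrable_one_sub_tanh_sq _) (integrable_const _),
    integral_one_sub_tanh_sq hq] at h
  have hβ : 0 < 1 - q := sub_pos.mpr hq₁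
  simp only [integral_const, probReal_univ, smul_eq_mul, one_mul] at h
  rw [ellfun_eq_integral, le_div_iff₀ hβ]
  calc (1 - 2 / ((1 - q) * A)) * (1 - q) = 1 - q - 2 / A := by field_simp
    _ ≤ _ := h

lemma exists_ellfun_eq (hq : q = Pfun ψ) (hq₁ : q < 1) {lam : ℝ} (hlam₀ : 0 ≤ lam)
    (hlam₁ : lam < 1) : ∃ A ∈ Set.Ioi 0, ellfun q ψ A = lam := by
  have hβ : 0 < (1 - q) * (1 - lam) := mul_pos (by linarith) (by linarith)
  set T := 2 / ((1 - q) * (1 - lam))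
  have hq₀ : 0 ≤ q := hq ▸ Pfun_nonneg ψ
  have hT : 1 ≤ T := by
    rw [le_div_iff₀ hβ]
    nlinarith
  have hlamT : lam ≤ ellfun q ψ T := by
    have hT_eq : 2 / ((1 - q) * T) = 1 - lam := by
      have : 1 - q ≠ 0 := by linarith
      simp only [T]
      field_simp
    linarith [one_sub_div_le_ellfun hq hq₁ (by linarith : 0 < T)]
  obtain ⟨A, hA, hAlam⟩ := intermediate_value_Icc hT continuous_ellfun.continuousOn
    ⟨ellfun_one.trans_le hlam₀, hlamT⟩
  exact ⟨A, zero_lt_one.trans_le hA.1, hAlam⟩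

lemma ellfun_Ainv (hq : q = Pfun ψ) (hq₁ : q < 1) {lam : ℝ} (hlam₀ : 0 ≤ lam)
    (hlam₁ : lam < 1) : ellfun q ψ (Ainv q ψ lam) = lam :=
  Function.invFunOn_eq (exists_ellfun_eq hq hq₁ hlam₀ hlam₁)

end EllFun

lemma integral_GammaHD_DH_le {q ψ c : ℝ} (hψ : 0 ≤ ψ) (hq : q = Pfun ψ) (hq₁ : q < 1)
    (hc : 0 < c) (A : ℝ) :
    ∫ z, GammaHD (Real.sqrt ψ * z) (DH (Real.sqrt ψ * z) A) ∂gaussianReal 0 1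
      ≤ Hstar q ψ + (-(2 * Real.log 2) - 2 * Real.log c) / 4 * ((1 - q) * (1 - ellfun q ψ A))
        + 2 * c := by
  set a := Real.sqrt ψ
  set K := -(2 * Real.log 2) - 2 * Real.log c
  have hint_entropy : Integrable (fun z => Real.log (2 * Real.cosh (a * z))
      - a * z * Real.tanh (a * z)) (gaussianReal 0 1) :=
    (integrable_log_two_mul_cosh a).sub (integrable_mul_tanh a)
  have hint_gap : Integrable (fun z => K / 4 * (1 - Real.tanh (a * z) ^ 2 - DH (a * z) A))
      (gaussianReal 0 1) :=
    ((integrable_one_sub_tanh_sq a).sub (integrable_DH a A)).const_mul _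
  have hint_sum : Integrable (fun z => Real.log (2 * Real.cosh (a * z))
      - a * z * Real.tanh (a * z) + K / 4 * (1 - Real.tanh (a * z) ^ 2 - DH (a * z) A))
      (gaussianReal 0 1) :=
    hint_entropy.add hint_gap
  have hint_Γ : Integrable (fun z => GammaHD (a * z) (DH (a * z) A)) (gaussianReal 0 1) :=
    integrable_gaussianReal_of_abs_le
      ((continuous_const_mul a).GammaHD ((continuous_const_mul a).DH continuous_const))
      fun z => abs_GammaHD_le (neg_sq_le_DH _ _) (DH_le _ _)
  calc ∫ z, GammaHD (a * z) (DH (a * z) A) ∂gaussianReal 0 1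
      ≤ ∫ z, (Real.log (2 * Real.cosh (a * z)) - a * z * Real.tanh (a * z)
        + K / 4 * (1 - Real.tanh (a * z) ^ 2 - DH (a * z) A) + 2 * c) ∂gaussianReal 0 1 :=
        integral_mono hint_Γ (hint_sum.add (integrable_const _)) fun z =>
          GammaHD_le (neg_sq_le_DH (a * z) A) (DH_le (a * z) A) hc
    _ = Hstar q ψ + K / 4 * ((1 - q) * (1 - ellfun q ψ A)) + 2 * c := by
        rw [integral_add hint_sum (integrable_const _), integral_add hint_entropy hint_gap,
          integral_const_mul, integral_log_two_mul_cosh_sub_mul_tanh hψ hq,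
          integral_one_sub_tanh_sq_sub_DH hq hq₁]
        simp

theorem HHfun_add_Hstar_le {q ψ lam c : ℝ} (hψ : 0 ≤ ψ) (hq : q = Pfun ψ) (hq₁ : q < 1)
    (hlam₀ : 0 ≤ lam) (hlam₁ : lam < 1) (hc : 0 < c) :
    HHfun q ψ lam + Hstar q ψ
      ≤ (1 - q) * (1 - lam) / 4 * (-(2 * Real.log 2) - 2 * Real.log c) + 2 * c := by
  have h := integral_GammaHD_DH_le hψ hq hq₁ hc (Ainv q ψ lam)
  rw [ellfun_Ainv hq hq₁ hlam₀ hlam₁] at h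
  rw [HHfun, integral_mul_gphi_eq_integral_gaussianReal]
  linarith

lemma gibbs_bound_le_of_le_half {β ι : ℝ} (hβ : β ≤ 1 / 2) (hι₀ : 0 < ι)
    (hι : ι ≤ 1) :
    β * ι / 4 * (-(2 * Real.log 2) - 2 * Real.log (ι / 8)) + 2 * (ι / 8)
      ≤ 0.81 * ι + ι / 2 * Real.log (1 / ι) := by
  have hL : 0 ≤ Real.log (1 / ι) := Real.log_nonneg (one_le_one_div hι₀ hι)
  have h8 : Real.log (ι / 8) = -Real.log (1 / ι) - 3 * Real.log 2 := by
    rw [show (8 : ℝ) = 2 ^ 3 by norm_num, Real.log_div hι₀.ne' (by norm_num), Real.log_pow,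
      one_div, Real.log_inv]
    push_cast
    ring
  have hlog2 := Real.log_two_lt_d9
  have h₁ : β * ι * Real.log 2 ≤ ι / 2 * Real.log 2 :=
    mul_le_mul_of_nonneg_right (by nlinarith) (Real.log_nonneg one_le_two)
  have h₂ : β * ι * Real.log (1 / ι) ≤ ι / 2 * Real.log (1 / ι) :=
    mul_le_mul_of_nonneg_right (by nlinarith) hL
  rw [h8]
  nlinarith

/-- Corollary 8.3; `κ = 0`. For `α ∈ (α_lb, α_ub)`, with `q = q_⋆(α)`
and `ψ = ψ_⋆(α) = R(q,α)`: parametrizing `λ = 1 - ι`, for all `0 < ι ≤ 0.025` one has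
`𝓗(λ) - 𝓗(1) ≤ 0.81 ι + (ι/2) log(1/ι)`, where `𝓗(1) = -𝓗_⋆`. -/
theorem HH_near_one_bound (α q : ℝ) (hα : α ∈ Set.Ioo alphaLB alphaUB)
    (hq : q ∈ Set.Ioo qLB qUB) (hfix : q = Pfun (Rfun 0 q α)) :
    ∀ ι : ℝ, 0 < ι → ι ≤ 0.025 →
      HHfun q (Rfun 0 q α) (1 - ι) - (-(Hstar q (Rfun 0 q α)))
        ≤ 0.81 * ι + ι / 2 * Real.log (1 / ι) := by
  intro ι hι₀ hι
  have hψ : 0 ≤ Rfun 0 q α := Rfun_nonneg 0 q (by norm_num [alphaLB] at hα; linarith [hα.1])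
  obtain ⟨hq_half, hq_one⟩ : 1 / 2 ≤ q ∧ q < 1 := by
    norm_num [qLB, qUB] at hq
    constructor <;> linarith [hq.1, hq.2]
  have hH := HHfun_add_Hstar_le hψ hfix hq_one (lam := 1 - ι) (c := ι / 8)
    (by linarith) (by linarith) (by positivity)
  have hnum := gibbs_bound_le_of_le_half (β := 1 - q) (by linarith) hι₀ (by linarith)
  rw [sub_sub_cancel] at hH
  linarith
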